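/- arXiv:1909.12360 — 9 statements merged into one kernel-verified Lean document; each statement's English description precedes it below -/
import Mathlib

section
/- Let D be an upper semicontinuous decomposition of a topological space M into compact subsets. Then D is monotone (every member is connected) if and only if π⁻¹(C) is connected for every connected subset C of M/D. -/
/-!
The fibres of the quotient map `π : M → M/D` are exactly the members of `D`, so monotonicity
means that `π` has connected fibres. Conversely, restricted over a connected `C`, the map `π` is
still a closed continuous surjection with connected fibres, hence a quotient map, and for such
maps the preimage of a connected closed set (here all of `C`) is connected.
-/

open Set Topology

theorem IsClosedMap.isConnected_preimage {α β : Type*} [TopologicalSpace α] [TopologicalSpace β]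
    {f : α → β} (hcont : Continuous f) (hclosed : IsClosedMap f)
    (hfib : ∀ b, IsConnected (f ⁻¹' {b})) {C : Set β} (hC : IsConnected C) :
    IsConnected (f ⁻¹' C) := by
  have hsurj : Function.Surjective f := fun b ↦ (hfib b).nonempty
  set g := C.restrictPreimage f
  have hgsurj : Function.Surjective g := hsurj.restrictPreimage C
  have hg : IsQuotientMap g := (hclosed.restrictPreimage C).isQuotientMap
    hcont.restrictPreimage hgsurj
  have hgfib : ∀ c, IsConnected (g ⁻¹' {c}) := fun c ↦ by
    refine ⟨hgsurj.nonempty_preimage.mpr (singleton_nonempty c), ?_⟩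
    rw [← IsInducing.subtypeVal.isPreconnected_image, image_val_preimage_restrictPreimage,
      image_singleton]
    exact (hfib c).isPreconnected
  have : ConnectedSpace C := isConnected_iff_connectedSpace.mp hC
  rw [isConnected_iff_connectedSpace, connectedSpace_iff_univ, ← preimage_univ]
  exact hg.isCoinducing.isConnected_preimage_of_isClosed hgfib isClosed_univ isConnected_univ

namespace Setoid

variable {α : Type*} {D : Set (Set α)} (H : ∀ a, ∃! b ∈ D, a ∈ b)

theorem preimage_mk_mkClasses_singleton (y : α) :
    Quotient.mk (mkClasses D H) ⁻¹' {Quotient.mk _ y} = {x | mkClasses D H x y} := by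
  ext x
  exact Quotient.eq

theorem preimage_mk_mkClasses_singleton_mem (q : Quotient (mkClasses D H)) :
    Quotient.mk _ ⁻¹' {q} ∈ D := by
  induction q using Quotient.inductionOn with
  | h y => rw [preimage_mk_mkClasses_singleton]; exact eqv_class_mem H

theorem eq_preimage_mk_mkClasses_singleton {d : Set α} (hd : d ∈ D) {y : α} (hy : y ∈ d) :
    d = Quotient.mk (mkClasses D H) ⁻¹' {Quotient.mk _ y} := by
  rw [preimage_mk_mkClasses_singleton]
  exact eq_eqv_class_of_mem H hd hy

end Setoid

theorem stmt_3_general {M : Type*} [TopologicalSpace M] (D : Set (Set M))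
    (hne : ∅ ∉ D)
    (H : ∀ a : M, ∃! b ∈ D, a ∈ b)
    (husc : IsClosedMap (Quotient.mk (Setoid.mkClasses D H))) :
    (∀ d ∈ D, IsConnected d) ↔
      ∀ C : Set (Quotient (Setoid.mkClasses D H)), IsConnected C →
        IsConnected (Quotient.mk (Setoid.mkClasses D H) ⁻¹' C) := by
  constructor
  · intro hmono C hC
    exact husc.isConnected_preimage continuous_quot_mk
      (fun q ↦ hmono _ (Setoid.preimage_mk_mkClasses_singleton_mem H q)) hC
  · intro hpre d hd
    obtain ⟨y, hy⟩ := nonempty_iff_ne_empty.mpr (ne_of_mem_of_not_mem hd hne)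
    rw [Setoid.eq_preimage_mk_mkClasses_singleton H hd hy]
    exact hpre _ isConnected_singleton

/-- An upper semicontinuous decomposition `D` of `M` into compact
subsets is monotone (every member connected) iff the preimage of every connected
subset of `M/D` is connected. -/
theorem stmt_3 {M : Type*} [TopologicalSpace M] (D : Set (Set M))
    (hcompact : ∀ d ∈ D, IsCompact d)
    (hne : ∅ ∉ D)
    (H : ∀ a : M, ∃! b ∈ D, a ∈ b)
    (husc : IsClosedMap (Quotient.mk (Setoid.mkClasses D H))) :
    (∀ d ∈ D, IsConnected d) ↔
      ∀ C : Set (Quotient (Setoid.mkClasses D H)), IsConnected C →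
        IsConnected (Quotient.mk (Setoid.mkClasses D H) ⁻¹' C) :=
  stmt_3_general D hne H husc
end

section
/- Let D be an upper semicontinuous monotone decomposition of a topological space M, let {x} be a singleton member of D, and suppose M/D is locally connected at π(x). Then M is locally connected at x. -/
/-!
The quotient map `π : M → M/D` is continuous, closed and surjective with connected fibres, so
preimages of connected sets are connected. Since the fibre over `π x` is `{x}`, closedness of `π`
makes the sets `π⁻¹' W`, `W ∈ 𝓝 (π x)`, a neighbourhood basis at `x`; pulling back a connected
neighbourhood of `π x` inside `W` gives a connected neighbourhood of `x` inside `π⁻¹' W`.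
-/

open Filter Topology Set

section ClosedMap

variable {X Y : Type*} [TopologicalSpace X] [TopologicalSpace Y] {f : X → Y}

theorem IsClosedMap.isPreconnected_preimage (hf : IsClosedMap f)
    (hsurj : Function.Surjective f) (hfib : ∀ y, IsPreconnected (f ⁻¹' {y}))
    {s : Set Y} (hs : IsPreconnected s) : IsPreconnected (f ⁻¹' s) := by
  rw [isPreconnected_closed_iff] at hs ⊢
  rintro t t' ht ht' hcov ⟨a, has, hat⟩ ⟨a', has', hat'⟩
  have hcov_image : s ⊆ f '' t ∪ f '' t' := fun b hb => by
    obtain ⟨c, rfl⟩ := hsurj b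
    exact (hcov hb).imp (mem_image_of_mem f) (mem_image_of_mem f)
  obtain ⟨b, hbs, ⟨y, hyt, hyb⟩, ⟨y', hy't', hy'b⟩⟩ :=
    hs _ _ (hf t ht) (hf t' ht') hcov_image ⟨f a, has, a, hat, rfl⟩ ⟨f a', has', a', hat', rfl⟩
  have hfib_sub : f ⁻¹' {b} ⊆ f ⁻¹' s := preimage_mono (singleton_subset_iff.2 hbs)
  obtain ⟨z, hzb, hzt, hzt'⟩ :=
    isPreconnected_closed_iff.1 (hfib b) t t' ht ht' (hfib_sub.trans hcov)
      ⟨y, hyb, hyt⟩ ⟨y', hy'b, hy't'⟩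
  exact ⟨z, hfib_sub hzb, hzt, hzt'⟩

theorem IsClosedMap.isConnected_preimage_s4 (hf : IsClosedMap f)
    (hsurj : Function.Surjective f) (hfib : ∀ y, IsPreconnected (f ⁻¹' {y}))
    {s : Set Y} (hs : IsConnected s) : IsConnected (f ⁻¹' s) :=
  ⟨hs.nonempty.preimage hsurj, hf.isPreconnected_preimage hsurj hfib hs.isPreconnected⟩

theorem IsClosedMap.exists_preimage_subset_of_preimage_singleton (hf : IsClosedMap f) {x : X}
    (hx : f ⁻¹' {f x} = {x}) {U : Set X} (hU : U ∈ 𝓝 x) : ∃ W ∈ 𝓝 (f x), f ⁻¹' W ⊆ U := by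
  have hle : comap f (𝓝 (f x)) ≤ 𝓝 x := by
    simpa only [hx, nhdsSet_singleton] using hf.comap_nhds_le (y := f x)
  exact mem_comap.1 (hle hU)

theorem IsClosedMap.exists_connected_nhds_of_preimage_singleton (hf : IsClosedMap f)
    (hcont : Continuous f) (hsurj : Function.Surjective f)
    (hfib : ∀ y, IsPreconnected (f ⁻¹' {y})) {x : X} (hx : f ⁻¹' {f x} = {x})
    (hlc : ∀ W ∈ 𝓝 (f x), ∃ V ∈ 𝓝 (f x), V ⊆ W ∧ IsConnected V) :
    ∀ U ∈ 𝓝 x, ∃ V ∈ 𝓝 x, V ⊆ U ∧ IsConnected V := by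
  intro U hU
  obtain ⟨W, hW, hWU⟩ := hf.exists_preimage_subset_of_preimage_singleton hx hU
  obtain ⟨V, hV, hVW, hVconn⟩ := hlc W hW
  exact ⟨f ⁻¹' V, hcont.continuousAt.preimage_mem_nhds hV, (preimage_mono hVW).trans hWU,
    hf.isConnected_preimage_s4 hsurj hfib hVconn⟩

end ClosedMap

theorem Setoid.preimage_mk_mkClasses {α : Type*} {D : Set (Set α)} (H : ∀ a, ∃! b ∈ D, a ∈ b)
    {d : Set α} (hd : d ∈ D) {y : α} (hy : y ∈ d) :
    Quotient.mk (mkClasses D H) ⁻¹' {Quotient.mk (mkClasses D H) y} = d := by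
  rw [eq_eqv_class_of_mem H hd hy]
  ext z
  exact Quotient.eq

theorem stmt_4_general {M : Type*} [TopologicalSpace M] (D : Set (Set M))
    (hconn : ∀ d ∈ D, IsConnected d)
    (H : ∀ a : M, ∃! b ∈ D, a ∈ b)
    (husc : IsClosedMap (Quotient.mk (Setoid.mkClasses D H)))
    (x : M) (hx : {x} ∈ D)
    (hlc : ∀ U ∈ 𝓝 (Quotient.mk (Setoid.mkClasses D H) x),
      ∃ V ∈ 𝓝 (Quotient.mk (Setoid.mkClasses D H) x), V ⊆ U ∧ IsConnected V) :
    ∀ U ∈ 𝓝 x, ∃ V ∈ 𝓝 x, V ⊆ U ∧ IsConnected V := by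
  have hfib : ∀ b, IsPreconnected (Quotient.mk (Setoid.mkClasses D H) ⁻¹' {b}) := by
    refine Quotient.ind fun y => ?_
    obtain ⟨d, ⟨hd, hyd⟩, -⟩ := H y
    rw [Setoid.preimage_mk_mkClasses H hd hyd]
    exact (hconn d hd).isPreconnected
  exact husc.exists_connected_nhds_of_preimage_singleton continuous_quotient_mk'
    Quotient.mk_surjective hfib (Setoid.preimage_mk_mkClasses H hx rfl) hlc

/-- If `D` is an upper semicontinuous monotone decomposition of `M`,
`{x}` is a singleton member of `D`, and `M/D` is locally connected at `π(x)`,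
then `M` is locally connected at `x`. ("Locally connected at a point": every
neighborhood of the point contains a connected neighborhood of the point.) -/
theorem stmt_4 {M : Type*} [TopologicalSpace M] (D : Set (Set M))
    (hcompact : ∀ d ∈ D, IsCompact d)
    (hconn : ∀ d ∈ D, IsConnected d)
    (H : ∀ a : M, ∃! b ∈ D, a ∈ b)
    (husc : IsClosedMap (Quotient.mk (Setoid.mkClasses D H)))
    (x : M) (hx : {x} ∈ D)
    (hlc : ∀ U ∈ 𝓝 (Quotient.mk (Setoid.mkClasses D H) x),
      ∃ V ∈ 𝓝 (Quotient.mk (Setoid.mkClasses D H) x), V ⊆ U ∧ IsConnected V) :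
    ∀ U ∈ 𝓝 x, ∃ V ∈ 𝓝 x, V ⊆ U ∧ IsConnected V :=
  stmt_4_general D hconn H husc x hx hlc
end

section
/- Let A be a null family of compact subsets of a metric space M (for each ε > 0 only finitely many members of A have diameter greater than ε). Suppose q ∈ M lies in no member of A. Then every neighborhood U of q contains a smaller neighborhood V of q such that every A ∈ A meeting V is contained in U. -/
/-!
Only finitely many members of `𝓐` have diameter larger than `ε / 2`; their union is closed and
misses `q`, so points close enough to `q` lie only in members of diameter at most `ε / 2`.
A member meeting `ball q (ε / 2)` at such a point then stays inside `ball q ε`.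
-/

open Filter Topology Metric

lemma eventually_forall_mem_diam_le {M : Type*} [PseudoMetricSpace M] {𝓐 : Set (Set M)}
    (hclosed : ∀ A ∈ 𝓐, IsClosed A) {ε : ℝ} (hfin : {A | A ∈ 𝓐 ∧ ε < diam A}.Finite)
    {q : M} (hq : ∀ A ∈ 𝓐, q ∉ A) :
    ∀ᶠ x in 𝓝 q, ∀ A ∈ 𝓐, x ∈ A → diam A ≤ ε := by
  have hfar : ∀ᶠ x in 𝓝 q, ∀ A ∈ {A | A ∈ 𝓐 ∧ ε < diam A}, x ∉ A :=
    hfin.eventually_all.2 fun A hA ↦ (hclosed A hA.1).isOpen_compl.mem_nhds (hq A hA.1)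
  filter_upwards [hfar] with x hx A hA hxA
  exact not_lt.1 fun hbig ↦ hx A ⟨hA, hbig⟩ hxA

lemma subset_ball_of_mem_of_diam_le {M : Type*} [PseudoMetricSpace M] {A : Set M}
    (hA : Bornology.IsBounded A) {q x : M} {r s : ℝ} (hxA : x ∈ A) (hx : dist x q < r)
    (hdiam : diam A ≤ s) : A ⊆ ball q (s + r) := fun y hy ↦
  calc dist y q ≤ dist y x + dist x q := dist_triangle y x q
    _ < s + r := add_lt_add_of_le_of_lt ((dist_le_diam_of_mem hA hy hxA).trans hdiam) hx

/-- If `𝓐` is a null family of compact subsets of a metric space `M`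
and `q` lies in no member of `𝓐`, then every neighborhood `U` of `q` contains a
neighborhood `V` of `q` such that every member of `𝓐` meeting `V` is contained
in `U`. -/
theorem stmt_5 {M : Type*} [MetricSpace M] (𝓐 : Set (Set M))
    (hcpt : ∀ A ∈ 𝓐, IsCompact A)
    (hnull : ∀ ε > (0:ℝ), {A | A ∈ 𝓐 ∧ ε < Metric.diam A}.Finite)
    (q : M) (hq : ∀ A ∈ 𝓐, q ∉ A) :
    ∀ U ∈ 𝓝 q, ∃ V ∈ 𝓝 q, V ⊆ U ∧ ∀ A ∈ 𝓐, (A ∩ V).Nonempty → A ⊆ U := by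
  intro U hU
  obtain ⟨ε, hε, hεU⟩ := Metric.mem_nhds_iff.1 hU
  have hsmall : ∀ᶠ x in 𝓝 q, ∀ A ∈ 𝓐, x ∈ A → diam A ≤ ε / 2 :=
    eventually_forall_mem_diam_le (fun A hA ↦ (hcpt A hA).isClosed) (hnull _ (half_pos hε)) hq
  refine ⟨ball q (ε / 2) ∩ {x | ∀ A ∈ 𝓐, x ∈ A → diam A ≤ ε / 2},
    inter_mem (ball_mem_nhds q (half_pos hε)) hsmall,
    fun x hx ↦ hεU (ball_subset_ball (half_le_self hε.le) hx.1), ?_⟩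
  rintro A hA ⟨x, hxA, hxq, hxsmall⟩
  have hAq := subset_ball_of_mem_of_diam_le (hcpt A hA).isBounded hxA hxq (hxsmall A hA hxA)
  rw [add_halves] at hAq
  exact hAq.trans hεU
end

section
/- Let D be a decomposition of a metric space M into compact subsets, and suppose the collection of non-singleton members of D forms a null family. Then D is an upper semicontinuous decomposition. -/
/-!
Given `d ⊆ U`, compactness of `d` gives `r > 0` with `thickening r d ⊆ U`. Only finitely many
members have diameter `> r / 2`; the union `B` of those not contained in `U` is compact and
misses `d`. Any member meeting `V := thickening (r / 2) d \ B` either lies in `U` already or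
has diameter `≤ r / 2`, and then lies in `thickening r d ⊆ U`.
-/

open Metric

section

variable {M : Type*}

def IsNullFamily [PseudoMetricSpace M] (D : Set (Set M)) : Prop :=
  ∀ ε > (0 : ℝ), {d | d ∈ D ∧ ε < diam d}.Finite

lemma isNullFamily_of_nonsingleton [PseudoMetricSpace M] {D : Set (Set M)}
    (hnull : ∀ ε > (0 : ℝ), {d | d ∈ D ∧ (¬ ∃ x : M, d = {x}) ∧ ε < diam d}.Finite) :
    IsNullFamily D := by
  intro ε hε
  refine (hnull ε hε).subset ?_
  rintro d ⟨hdD, hdiam⟩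
  refine ⟨hdD, ?_, hdiam⟩
  rintro ⟨x, rfl⟩
  rw [diam_singleton] at hdiam
  exact hε.not_gt hdiam

lemma pairwiseDisjoint_of_existsUnique_mem {D : Set (Set M)} (H : ∀ a : M, ∃! b ∈ D, a ∈ b) :
    D.PairwiseDisjoint id := by
  intro d hd d' hd' hne
  refine Set.disjoint_left.mpr fun x hxd hxd' => hne ?_
  exact (H x).unique ⟨hd, hxd⟩ ⟨hd', hxd'⟩

lemma subset_thickening_add_of_diam_le [PseudoMetricSpace M] {s t : Set M} {x : M} {δ ε : ℝ}
    (hs : Bornology.IsBounded s) (hdiam : diam s ≤ ε) (hxs : x ∈ s) (hxt : x ∈ thickening δ t) :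
    s ⊆ thickening (ε + δ) t := by
  obtain ⟨z, hzt, hxz⟩ := mem_thickening_iff.mp hxt
  intro y hys
  refine mem_thickening_iff.mpr ⟨z, hzt, ?_⟩
  calc dist y z ≤ dist y x + dist x z := dist_triangle y x z
    _ < ε + δ := add_lt_add_of_le_of_lt ((dist_le_diam_of_mem hs hys hxs).trans hdiam) hxz

lemma IsNullFamily.exists_isOpen_forall_subset [MetricSpace M] {D : Set (Set M)}
    (hnull : IsNullFamily D) (hcpt : ∀ d ∈ D, IsCompact d) (hdisj : D.PairwiseDisjoint id)
    {d U : Set M} (hd : d ∈ D) (hU : IsOpen U) (hdU : d ⊆ U) :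
    ∃ V : Set M, IsOpen V ∧ d ⊆ V ∧ ∀ d' ∈ D, (d' ∩ V).Nonempty → d' ⊆ U := by
  obtain ⟨r, hr, hrU⟩ := (hcpt d hd).exists_thickening_subset_open hU hdU
  set F := {d' | d' ∈ D ∧ ¬ d' ⊆ U ∧ r / 2 < diam d'}
  have hF : F.Finite :=
    (hnull (r / 2) (half_pos hr)).subset fun d' hd' => ⟨hd'.1, hd'.2.2⟩
  have hB : IsClosed (⋃ d' ∈ F, d') :=
    (hF.isCompact_biUnion fun d' hd' => hcpt d' hd'.1).isClosed
  refine ⟨thickening (r / 2) d \ ⋃ d' ∈ F, d', isOpen_thickening.sdiff hB, ?_, ?_⟩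
  · refine Set.subset_sdiff.mpr ⟨self_subset_thickening (half_pos hr) d, ?_⟩
    refine Set.disjoint_iUnion₂_right.mpr fun d' hd' => hdisj hd hd'.1 ?_
    rintro rfl
    exact hd'.2.1 hdU
  · rintro d' hd' ⟨x, hxd', hxV, hxB⟩
    by_contra hd'U
    have hdiam : diam d' ≤ r / 2 :=
      not_lt.mp fun hlt => hxB (Set.mem_biUnion ⟨hd', hd'U, hlt⟩ hxd')
    refine hd'U (subset_trans ?_ hrU)
    simpa only [add_halves] using
      subset_thickening_add_of_diam_le (hcpt d' hd').isBounded hdiam hxd' hxV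

end

/-- If `D` is a decomposition of a metric space `M` into compact
subsets whose non-singleton members form a null family, then `D` is upper
semicontinuous: for each member `d` and open `U ⊇ d` there is an open `V ⊇ d`
such that every member of `D` meeting `V` is contained in `U`. -/
theorem stmt_6 {M : Type*} [MetricSpace M] (D : Set (Set M))
    (hcpt : ∀ d ∈ D, IsCompact d)
    (H : ∀ a : M, ∃! b ∈ D, a ∈ b)
    (hnull : ∀ ε > (0:ℝ),
      {d | d ∈ D ∧ (¬ ∃ x : M, d = {x}) ∧ ε < Metric.diam d}.Finite) :
    ∀ d ∈ D, ∀ U : Set M, IsOpen U → d ⊆ U →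
      ∃ V : Set M, IsOpen V ∧ d ⊆ V ∧ ∀ d' ∈ D, (d' ∩ V).Nonempty → d' ⊆ U :=
  fun _ hd _ hU hdU => (isNullFamily_of_nonsingleton hnull).exists_isOpen_forall_subset hcpt
    (pairwiseDisjoint_of_existsUnique_mem H) hd hU hdU
end

section
/- A compact, connected, locally connected metrizable topological space is path connected. -/
/-!
Compactness and local connectedness make `M` uniformly locally connected: for every `ε > 0`
there is `δ > 0` such that any two points at distance `< δ` lie in a common preconnected set of
diameter `≤ ε`. Inside a preconnected set any two points are joined by a chain of `δ`-close
points, so a chain of such links at scale `ε` refines to a chain of links at scale `ε / 2` that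
stays within `ε` of the original one. Refining the single link `{x, y} ⊆ M` at the scales
`D / 2 ^ n`, the step functions `t ↦ c ⌊t N⌋` of the successive chains converge uniformly on
`[0, 1]`; each of them moves by at most its scale on intervals of length `1 / N`, so the limit is
continuous, i.e. a path from `x` to `y`.
-/

open Metric Set Filter Topology

theorem Relation.ReflTransGen.exists_seq {α : Type*} {r : α → α → Prop} {a b : α}
    (h : Relation.ReflTransGen r a b) (hb : r b b) :
    ∃ (m : ℕ) (q : ℕ → α), q 0 = a ∧ (∀ i, m ≤ i → q i = b) ∧ ∀ i, r (q i) (q (i + 1)) := by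
  induction h using Relation.ReflTransGen.head_induction_on with
  | refl => exact ⟨0, fun _ => b, rfl, fun _ _ => rfl, fun _ => hb⟩
  | @head a c hac _ ih =>
    obtain ⟨m, q, hq0, hqm, hq⟩ := ih
    refine ⟨m + 1, fun | 0 => a | i + 1 => q i, rfl, ?_, ?_⟩
    · rintro (_ | i) hi
      · omega
      · exact hqm i (by omega)
    · rintro (_ | i)
      · simpa [hq0] using hac
      · exact hq i

theorem unitInterval.floor_mul_natCast_le (t : unitInterval) (N : ℕ) : ⌊(t : ℝ) * N⌋₊ ≤ N :=
  Nat.floor_le_of_le (mul_le_of_le_one_left (Nat.cast_nonneg N) t.2.2)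

theorem Nat.succ_div_mod_of_mod_add_one_lt {j L : ℕ} (hL : 0 < L) (h : j % L + 1 < L) :
    (j + 1) / L = j / L ∧ (j + 1) % L = j % L + 1 := by
  rw [Nat.div_mod_unique hL]
  have := Nat.mod_add_div j L
  omega

theorem Nat.succ_div_mod_of_mod_add_one_eq {j L : ℕ} (hL : 0 < L) (h : j % L + 1 = L) :
    (j + 1) / L = j / L + 1 ∧ (j + 1) % L = 0 := by
  rw [Nat.div_mod_unique hL]
  have := Nat.mod_add_div j L
  exact ⟨by linarith, hL⟩

section LinkedWithin

variable {M : Type*} [PseudoMetricSpace M]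

def LinkedWithin (ε : ℝ) (a b : M) : Prop :=
  ∃ S : Set M, IsPreconnected S ∧ a ∈ S ∧ b ∈ S ∧ ∀ p ∈ S, ∀ q ∈ S, dist p q ≤ ε

theorem LinkedWithin.dist_le {ε : ℝ} {a b : M} (h : LinkedWithin ε a b) : dist a b ≤ ε := by
  obtain ⟨S, -, ha, hb, hS⟩ := h
  exact hS a ha b hb

theorem linkedWithin_univ [PreconnectedSpace M] {ε : ℝ} (hε : ∀ p q : M, dist p q ≤ ε)
    (a b : M) : LinkedWithin ε a b :=
  ⟨univ, isPreconnected_univ, trivial, trivial, fun p _ q _ => hε p q⟩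

theorem exists_pos_forall_dist_lt_linkedWithin [CompactSpace M] [LocallyConnectedSpace M]
    {ε : ℝ} (hε : 0 < ε) : ∃ δ > 0, ∀ a b : M, dist a b < δ → LinkedWithin ε a b := by
  have hV (x : M) : ∃ V ⊆ ball x (ε / 2), IsOpen V ∧ x ∈ V ∧ IsConnected V :=
    locallyConnectedSpace_iff_subsets_isOpen_isConnected.mp ‹_› x _
      (ball_mem_nhds x (half_pos hε))
  choose V hVball hVopen hVmem hVconn using hV
  obtain ⟨δ, hδ, hlebesgue⟩ := lebesgue_number_lemma_of_metric isCompact_univ hVopen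
    (fun x _ => mem_iUnion.mpr ⟨x, hVmem x⟩)
  refine ⟨δ, hδ, fun a b hab => ?_⟩
  obtain ⟨x, hx⟩ := hlebesgue a (mem_univ a)
  refine ⟨V x, (hVconn x).isPreconnected, hx (mem_ball_self hδ),
    hx (mem_ball_comm.mp hab), fun p hp q hq => ?_⟩
  calc dist p q ≤ dist p x + dist q x := dist_triangle_right p q x
    _ ≤ ε / 2 + ε / 2 := add_le_add (hVball x hp).le (hVball x hq).le
    _ = ε := add_halves ε

theorem IsPreconnected.reflTransGen_dist_lt {S : Set M} (hS : IsPreconnected S) {δ : ℝ}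
    (hδ : 0 < δ) {a b : M} (ha : a ∈ S) (hb : b ∈ S) :
    Relation.ReflTransGen (fun p q => p ∈ S ∧ q ∈ S ∧ dist p q < δ) a b := by
  set R : M → M → Prop := fun p q => p ∈ S ∧ q ∈ S ∧ dist p q < δ
  have : Std.Symm R := ⟨fun p q ⟨hp, hq, hpq⟩ => ⟨hq, hp, dist_comm p q ▸ hpq⟩⟩
  refine hS.induction₂ _ (fun x hx => ?_) (fun _ _ _ _ _ _ => .trans) (fun _ _ _ _ => symm) ha hb
  filter_upwards [self_mem_nhdsWithin, mem_nhdsWithin_of_mem_nhds (ball_mem_nhds x hδ)]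
    with y hy hxy
  exact .single ⟨hx, hy, mem_ball_comm.mp hxy⟩

theorem LinkedWithin.exists_seq [CompactSpace M] [LocallyConnectedSpace M] {ε ε' : ℝ}
    {a b : M} (h : LinkedWithin ε a b) (hε' : 0 < ε') :
    ∃ (m : ℕ) (q : ℕ → M), q 0 = a ∧ (∀ i, m ≤ i → q i = b) ∧ (∀ i, dist (q i) a ≤ ε) ∧
      ∀ i, LinkedWithin ε' (q i) (q (i + 1)) := by
  obtain ⟨δ, hδ, hlink⟩ := exists_pos_forall_dist_lt_linkedWithin (M := M) hε'
  obtain ⟨S, hS, ha, hb, hSdiam⟩ := h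
  obtain ⟨m, q, hq0, hqm, hq⟩ := (hS.reflTransGen_dist_lt hδ ha hb).exists_seq ⟨hb, hb, by simpa⟩
  exact ⟨m, q, hq0, hqm, fun i => hSdiam _ (hq i).1 _ ha,
    fun i => hlink _ _ (hq i).2.2⟩

end LinkedWithin

structure LinkChain {M : Type*} [PseudoMetricSpace M] (ε : ℝ) (x y : M) where
  N : ℕ
  N_pos : 0 < N
  c : ℕ → M
  c_zero : c 0 = x
  c_N : c N = y
  linked : ∀ k < N, LinkedWithin ε (c k) (c (k + 1))

namespace LinkChain

variable {M : Type*} [PseudoMetricSpace M] {ε : ℝ} {x y : M}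

noncomputable def toFun (A : LinkChain ε x y) (t : unitInterval) : M :=
  A.c ⌊(t : ℝ) * A.N⌋₊

theorem toFun_zero (A : LinkChain ε x y) : A.toFun 0 = x := by
  simp [toFun, A.c_zero]

theorem toFun_one (A : LinkChain ε x y) : A.toFun 1 = y := by
  simp [toFun, A.c_N]

theorem nonneg (A : LinkChain ε x y) : 0 ≤ ε :=
  dist_nonneg.trans (A.linked 0 A.N_pos).dist_le

theorem dist_toFun_le (A : LinkChain ε x y) {s t : unitInterval} (hst : dist s t < 1 / A.N) :
    dist (A.toFun s) (A.toFun t) ≤ ε := by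
  wlog hle : (s : ℝ) ≤ t generalizing s t
  · rw [dist_comm] at hst ⊢
    exact this hst (le_of_not_ge hle)
  have hN : (0 : ℝ) < A.N := Nat.cast_pos.mpr A.N_pos
  have hlt : (t : ℝ) * A.N < s * A.N + 1 := by
    rw [Subtype.dist_eq, Real.dist_eq, abs_sub_comm, abs_of_nonneg (sub_nonneg.mpr hle),
      lt_div_iff₀ hN, sub_mul] at hst
    linarith
  have hfloor_le : ⌊(s : ℝ) * A.N⌋₊ ≤ ⌊(t : ℝ) * A.N⌋₊ :=
    Nat.floor_le_floor (mul_le_mul_of_nonneg_right hle hN.le)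
  have hfloor_lt : ⌊(t : ℝ) * A.N⌋₊ < ⌊(s : ℝ) * A.N⌋₊ + 2 := by
    have h1 := Nat.floor_le (mul_nonneg t.2.1 hN.le)
    have h2 := Nat.lt_floor_add_one ((s : ℝ) * A.N)
    exact_mod_cast (show (⌊(t : ℝ) * A.N⌋₊ : ℝ) < ⌊(s : ℝ) * A.N⌋₊ + 2 by linarith)
  unfold toFun
  rcases hfloor_le.eq_or_lt with heq | hlt'
  · rw [heq, dist_self]
    exact A.nonneg
  · have hsucc : ⌊(t : ℝ) * A.N⌋₊ = ⌊(s : ℝ) * A.N⌋₊ + 1 := by omega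
    rw [hsucc]
    exact (A.linked _ (by have := unitInterval.floor_mul_natCast_le t A.N; omega)).dist_le

theorem exists_refine [CompactSpace M] [LocallyConnectedSpace M] (A : LinkChain ε x y)
    {ε' : ℝ} (hε' : 0 < ε') : ∃ B : LinkChain ε' x y, ∀ t, dist (B.toFun t) (A.toFun t) ≤ ε := by
  have hseq (k : ℕ) : ∃ (m : ℕ) (q : ℕ → M), q 0 = A.c k ∧ (∀ i, dist (q i) (A.c k) ≤ ε) ∧
      (k < A.N → (∀ i, m ≤ i → q i = A.c (k + 1)) ∧ ∀ i, LinkedWithin ε' (q i) (q (i + 1))) := by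
    by_cases hk : k < A.N
    · obtain ⟨m, q, hq0, hqm, hqdist, hqlink⟩ := (A.linked k hk).exists_seq hε'
      exact ⟨m, q, hq0, hqdist, fun _ => ⟨hqm, hqlink⟩⟩
    · exact ⟨0, fun _ => A.c k, rfl, fun _ => (dist_self _).trans_le A.nonneg, (absurd · hk)⟩
  choose m q hq0 hqdist hq using hseq
  -- every link of `A` is subdivided into the same number `L` of finer links
  set L := (Finset.range A.N).sup m + 1
  have hL : 0 < L := Nat.succ_pos _
  have hmL {k : ℕ} (hk : k < A.N) : m k ≤ L :=
    (Finset.le_sup (Finset.mem_range.mpr hk)).trans (Nat.le_succ _)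
  set c : ℕ → M := fun j => q (j / L) (j % L)
  have hc_succ {j : ℕ} (hj : j / L < A.N) : c (j + 1) = q (j / L) (j % L + 1) := by
    rcases Nat.lt_or_eq_of_le (Nat.mod_lt j hL) with hlt | heq
    · obtain ⟨hdiv, hmod⟩ := Nat.succ_div_mod_of_mod_add_one_lt hL hlt
      simp only [c, hdiv, hmod]
    · obtain ⟨hdiv, hmod⟩ := Nat.succ_div_mod_of_mod_add_one_eq hL heq
      rw [show j % L + 1 = L from heq]
      simp only [c, hdiv, hmod, hq0]
      exact ((hq _ hj).1 L (hmL hj)).symm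
  refine ⟨⟨A.N * L, Nat.mul_pos A.N_pos hL, c, ?_, ?_, fun j hj => ?_⟩, fun t => ?_⟩
  · simp [c, hq0, A.c_zero]
  · simp [c, Nat.mul_div_cancel _ hL, hq0, A.c_N]
  · have hj' : j / L < A.N := Nat.div_lt_of_lt_mul (Nat.mul_comm A.N L ▸ hj)
    rw [hc_succ hj']
    exact (hq _ hj').2 _
  · have hfloor : ⌊(t : ℝ) * ↑(A.N * L)⌋₊ / L = ⌊(t : ℝ) * A.N⌋₊ := by
      rw [← Nat.floor_div_natCast, Nat.cast_mul, ← mul_assoc,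
        mul_div_cancel_right₀ _ (Nat.cast_ne_zero.mpr hL.ne')]
    simp only [toFun, c, hfloor]
    exact hqdist _ _

end LinkChain

theorem LinkChain.exists_seq {M : Type*} [PseudoMetricSpace M] [CompactSpace M]
    [PreconnectedSpace M] [LocallyConnectedSpace M] {D : ℝ} (hD : 0 < D)
    (hdist : ∀ p q : M, dist p q ≤ D / 2) (x y : M) :
    ∃ A : ∀ n : ℕ, LinkChain (D / 2 / 2 ^ n) x y,
      ∀ n t, dist ((A (n + 1)).toFun t) ((A n).toFun t) ≤ D / 2 / 2 ^ n := by
  have hstep (n : ℕ) (A : LinkChain (D / 2 / 2 ^ n) x y) :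
      ∃ B : LinkChain (D / 2 / 2 ^ (n + 1)) x y,
        ∀ t, dist (B.toFun t) (A.toFun t) ≤ D / 2 / 2 ^ n :=
    A.exists_refine (by positivity)
  choose B hB using hstep
  let A₀ : LinkChain (D / 2 / 2 ^ 0) x y :=
    ⟨1, one_pos, fun k => if k = 0 then x else y, rfl, rfl,
      fun _ _ => linkedWithin_univ (by simpa using hdist) _ _⟩
  exact ⟨fun n => Nat.rec A₀ B n, fun n => hB n _⟩

theorem uniformContinuous_of_forall_dist_le {X Y : Type*} [PseudoMetricSpace X]
    [PseudoMetricSpace Y] {γ : X → Y} {u : ℕ → X → Y} {ε : ℕ → ℝ}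
    (hε : Tendsto ε atTop (𝓝 0)) (hu : ∀ n t, dist (u n t) (γ t) ≤ ε n)
    (hosc : ∀ n, ∃ δ > 0, ∀ s t, dist s t < δ → dist (u n s) (u n t) ≤ ε n) :
    UniformContinuous γ := by
  refine Metric.uniformContinuous_iff.mpr fun e he => ?_
  obtain ⟨n, hn⟩ := (hε.eventually (gt_mem_nhds (div_pos he three_pos))).exists
  obtain ⟨δ, hδ, hδosc⟩ := hosc n
  refine ⟨δ, hδ, fun {s t} hst => ?_⟩
  calc dist (γ s) (γ t) ≤ dist (u n s) (γ s) + dist (u n s) (u n t) + dist (u n t) (γ t) := by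
        linarith [dist_triangle4 (γ s) (u n s) (u n t) (γ t), dist_comm (γ s) (u n s)]
    _ ≤ ε n + ε n + ε n := by gcongr <;> [exact hu n s; exact hδosc s t hst; exact hu n t]
    _ < e := by linarith

theorem PathConnectedSpace.of_compactSpace_of_locallyConnectedSpace {M : Type*} [MetricSpace M]
    [CompactSpace M] [ConnectedSpace M] [LocallyConnectedSpace M] : PathConnectedSpace M := by
  refine ⟨inferInstance, fun x y => ?_⟩
  set D := 2 * diam (univ : Set M) + 1
  have hdist (p q : M) : dist p q ≤ D / 2 := by
    linarith [dist_le_diam_of_mem isBounded_of_compactSpace (mem_univ p) (mem_univ q)]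
  have hD : 0 < D := by positivity
  obtain ⟨A, hA⟩ := LinkChain.exists_seq hD hdist x y
  set u := fun n => (A n).toFun
  have hlim (t : unitInterval) : ∃ z, Tendsto (u · t) atTop (𝓝 z) :=
    cauchySeq_tendsto_of_complete (cauchySeq_of_le_geometric_two fun n => by
      rw [dist_comm]; exact hA n t)
  choose γ hγ using hlim
  have hdist_lim (n t) : dist (u n t) (γ t) ≤ D / 2 ^ n :=
    dist_le_of_le_geometric_two_of_tendsto (fun n => by rw [dist_comm]; exact hA n t) (hγ t) n
  have hcont : UniformContinuous γ := by
    refine uniformContinuous_of_forall_dist_le ?_ hdist_lim fun n =>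
      ⟨1 / (A n).N, by have := (A n).N_pos; positivity, fun s t hst =>
        ((A n).dist_toFun_le hst).trans
          (div_le_div_of_nonneg_right (half_le_self hD.le) (by positivity))⟩
    simpa [div_eq_mul_inv] using
      (tendsto_pow_atTop_nhds_zero_of_lt_one (r := (1 / 2 : ℝ)) (by norm_num)
        (by norm_num)).const_mul D
  have hγ0 : γ 0 = x := tendsto_nhds_unique (hγ 0) (by simp [u, LinkChain.toFun_zero])
  have hγ1 : γ 1 = y := tendsto_nhds_unique (hγ 1) (by simp [u, LinkChain.toFun_one])
  exact ⟨⟨⟨γ, hcont.continuous⟩, hγ0, hγ1⟩⟩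

/-- A compact, connected, locally connected metrizable space is
path connected. -/
theorem stmt_8 {M : Type*} [TopologicalSpace M] [CompactSpace M]
    [ConnectedSpace M] [LocallyConnectedSpace M]
    [TopologicalSpace.MetrizableSpace M] :
    PathConnectedSpace M := by
  let _ : MetricSpace M := TopologicalSpace.metrizableSpaceMetric M
  exact PathConnectedSpace.of_compactSpace_of_locallyConnectedSpace
end

section
/- Let X be a proper CAT(0) space, Y ⊆ X a closed convex subset, x₀ ∈ X, and let (rᵢ) be geodesic rays based at x₀ converging (uniformly on compacta) to a geodesic ray r based at x₀. If each rᵢ intersects Y, then either r intersects Y or r is asymptotic to a geodesic ray contained in Y (i.e., r(∞) lies in the boundary of Y). -/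
/-- A geodesic ray based at `r 0`, parametrized by `[0,∞)` (values for negative
times are irrelevant). -/
def IsGeodesicRay {X : Type*} [MetricSpace X] (r : ℝ → X) : Prop :=
  ∀ s t : ℝ, 0 ≤ s → 0 ≤ t → dist (r s) (r t) = |s - t|

/-- Two rays are asymptotic if they stay at bounded distance. -/
def AsymptoticRays {X : Type*} [MetricSpace X] (r r' : ℝ → X) : Prop :=
  ∃ C : ℝ, ∀ t : ℝ, 0 ≤ t → dist (r t) (r' t) ≤ C

/-- Every pair of points is joined by a geodesic. -/
def GeodesicSpace (X : Type*) [MetricSpace X] : Prop :=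
  ∀ x y : X, ∃ g : ℝ → X, g 0 = x ∧ g (dist x y) = y ∧
    ∀ s ∈ Set.Icc 0 (dist x y), ∀ t ∈ Set.Icc 0 (dist x y), dist (g s) (g t) = |s - t|

/-- CAT(0): a geodesic space satisfying the CN (Bruhat–Tits) inequality. -/
def CAT0 (X : Type*) [MetricSpace X] : Prop :=
  GeodesicSpace X ∧ ∀ x y m z : X, dist x m = dist x y / 2 → dist y m = dist x y / 2 →
    dist z m ^ 2 ≤ (dist z x ^ 2 + dist z y ^ 2) / 2 - dist x y ^ 2 / 4

/-- A subset is (geodesically) convex if it contains every point lying on a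
geodesic between two of its points. -/
def MetricConvex {X : Type*} [MetricSpace X] (S : Set X) : Prop :=
  ∀ x ∈ S, ∀ y ∈ S, ∀ z : X, dist x z + dist z y = dist x y → z ∈ S


/-! Pick times `τₙ` with `rₙ(τₙ) ∈ Y` and pass to an ultrafilter on `ℕ`. If the `τₙ` stay
bounded they converge to some `t₀`, and `r(t₀) = lim rₙ(τₙ) ∈ Y` since `Y` is closed. Otherwise
`τₙ → ∞`. Fix `p ∈ Y`; the geodesic `gₙ` from `p` to `rₙ(τₙ)` lies in `Y` by convexity. The
distance between two geodesics is convex in CAT(0), and `rₙ`, `gₙ` end at the same point, so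
`d(rₙ(t), gₙ(t)) ≤ 2 d(x₀, p)`. Since `X` is proper, the `gₙ` converge pointwise to a geodesic
ray in the closed set `Y`, which stays within `2 d(x₀, p) + 1` of `r`. -/

open Set Filter Topology

theorem ContinuousOn.le_chord_of_midpoint_le {f : ℝ → ℝ} (hf : ContinuousOn f (Icc 0 1))
    (hmid : ∀ s ∈ Icc (0 : ℝ) 1, ∀ t ∈ Icc (0 : ℝ) 1, f ((s + t) / 2) ≤ (f s + f t) / 2)
    {s : ℝ} (hs : s ∈ Icc (0 : ℝ) 1) : f s ≤ (1 - s) * f 0 + s * f 1 := by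
  set g : ℝ → ℝ := fun s => f s - ((1 - s) * f 0 + s * f 1)
  have hgmid : ∀ s ∈ Icc (0 : ℝ) 1, ∀ t ∈ Icc (0 : ℝ) 1, g ((s + t) / 2) ≤ (g s + g t) / 2 := by
    intro s hs t ht
    have := hmid s hs t ht
    simp only [g]
    linarith
  obtain ⟨m, hm, hmax⟩ := isCompact_Icc.exists_isMaxOn (nonempty_Icc.2 zero_le_one)
    (hf.sub (by fun_prop) : ContinuousOn g (Icc 0 1))
  -- the maximum point `m` is the midpoint of an endpoint, where `g` vanishes, and some `u`
  have hgm : g m ≤ 0 := by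
    obtain ⟨e, u, he, hu, hmid_eq⟩ : ∃ e u, g e = 0 ∧ u ∈ Icc (0 : ℝ) 1 ∧ e ∈ Icc (0 : ℝ) 1 ∧
        (e + u) / 2 = m := by
      rcases le_or_gt m (1 / 2) with h | h
      · exact ⟨0, 2 * m, by simp [g], ⟨by linarith [hm.1], by linarith⟩,
          left_mem_Icc.2 zero_le_one, by ring⟩
      · exact ⟨1, 2 * m - 1, by simp [g], ⟨by linarith, by linarith [hm.2]⟩,
          right_mem_Icc.2 zero_le_one, by ring⟩
    have := hgmid e hmid_eq.1 u hu
    rw [hmid_eq.2, he] at this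
    linarith [show g u ≤ g m from hmax hu]
  have : g s ≤ 0 := (show g s ≤ g m from hmax hs).trans hgm
  simp only [g] at this
  linarith

section

variable {X : Type*} [MetricSpace X]

def IsGeodesicOn (γ : ℝ → X) (a : ℝ) : Prop :=
  ∀ s ∈ Icc 0 a, ∀ t ∈ Icc 0 a, dist (γ s) (γ t) = |s - t|

theorem IsGeodesicRay.isGeodesicOn {r : ℝ → X} (hr : IsGeodesicRay r) (a : ℝ) :
    IsGeodesicOn r a :=
  fun s hs t ht => hr s t hs.1 ht.1

namespace IsGeodesicOn

variable {γ : ℝ → X} {a : ℝ}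

theorem continuousOn (hγ : IsGeodesicOn γ a) : ContinuousOn γ (Icc 0 a) :=
  (LipschitzOnWith.of_dist_le_mul (K := 1) fun s hs t ht => by
    rw [hγ s hs t ht, Real.dist_eq, NNReal.coe_one, one_mul]).continuousOn

theorem reverse (hγ : IsGeodesicOn γ a) : IsGeodesicOn (fun u => γ (a - u)) a := by
  intro s hs t ht
  rw [hγ (a - s) ⟨by linarith [hs.2], by linarith [hs.1]⟩ (a - t)
    ⟨by linarith [ht.2], by linarith [ht.1]⟩, abs_sub_comm]
  ring_nf

theorem dist_midpoint_left (hγ : IsGeodesicOn γ a) {s t : ℝ} (hs : s ∈ Icc 0 a)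
    (ht : t ∈ Icc 0 a) : dist (γ s) (γ ((s + t) / 2)) = dist (γ s) (γ t) / 2 := by
  have hm : (s + t) / 2 ∈ Icc 0 a := ⟨by linarith [hs.1, ht.1], by linarith [hs.2, ht.2]⟩
  rw [hγ s hs _ hm, hγ s hs t ht, show s - (s + t) / 2 = (s - t) / 2 by ring, abs_div, abs_two]

theorem dist_midpoint_right (hγ : IsGeodesicOn γ a) {s t : ℝ} (hs : s ∈ Icc 0 a)
    (ht : t ∈ Icc 0 a) : dist (γ t) (γ ((s + t) / 2)) = dist (γ s) (γ t) / 2 := by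
  rw [add_comm, hγ.dist_midpoint_left ht hs, dist_comm]

end IsGeodesicOn

-- the geodesic is extended by constants outside `[0, dist x y]`
theorem GeodesicSpace.exists_clampedGeodesic (hX : GeodesicSpace X) (x y : X) :
    ∃ g : ℝ → X, IsGeodesicOn g (dist x y) ∧ g 0 = x ∧ g (dist x y) = y ∧
      ∀ s, dist x (g s) ≤ |s| ∧ dist x (g s) + dist (g s) y = dist x y := by
  obtain ⟨g, hg0, hgL, hg⟩ := hX x y
  set L := dist x y
  have hL : 0 ≤ L := dist_nonneg
  have hclamp : ∀ s, max 0 (min s L) ∈ Icc 0 L := fun s =>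
    ⟨le_max_left _ _, max_le hL (min_le_right _ _)⟩
  have hclamp_of_mem : ∀ s ∈ Icc 0 L, max 0 (min s L) = s := fun s hs => by
    rw [min_eq_left hs.2, max_eq_right hs.1]
  refine ⟨fun s => g (max 0 (min s L)), fun s hs t ht => ?_, ?_, ?_, fun s => ⟨?_, ?_⟩⟩
  · simp only [hclamp_of_mem s hs, hclamp_of_mem t ht]
    exact hg s hs t ht
  · exact (congrArg g (hclamp_of_mem 0 ⟨le_rfl, hL⟩)).trans hg0
  · exact (congrArg g (hclamp_of_mem L ⟨hL, le_rfl⟩)).trans hgL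
  · rw [← hg0, hg 0 ⟨le_rfl, hL⟩ _ (hclamp s), zero_sub, abs_neg,
      abs_of_nonneg (hclamp s).1]
    exact max_le (abs_nonneg s) ((min_le_left _ _).trans (le_abs_self s))
  · rw [← hg0, ← hgL, hg 0 ⟨le_rfl, hL⟩ _ (hclamp s), hg _ (hclamp s) L ⟨hL, le_rfl⟩,
      abs_of_nonpos (by linarith [(hclamp s).1]), abs_of_nonpos (by linarith [(hclamp s).2])]
    ring

namespace CAT0

theorem dist_midpoints_le_of_eq_left (hX : CAT0 X) {z x y m m' : X}
    (h1 : dist z m = dist z x / 2) (h2 : dist x m = dist z x / 2)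
    (h3 : dist z m' = dist z y / 2) (h4 : dist y m' = dist z y / 2) :
    dist m m' ≤ dist x y / 2 := by
  have A := hX.2 z x m y h1 h2
  have B := hX.2 z y m' m h3 h4
  rw [dist_comm m z, dist_comm m y, h1] at B
  rw [dist_comm y z, dist_comm y x] at A
  have hsq : dist m m' ^ 2 ≤ (dist x y / 2) ^ 2 := by nlinarith
  exact (pow_le_pow_iff_left₀ dist_nonneg (by positivity) two_ne_zero).1 hsq

theorem dist_midpoints_le (hX : CAT0 X) {p q p' q' m m' : X}
    (h1 : dist p m = dist p q / 2) (h2 : dist q m = dist p q / 2)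
    (h3 : dist p' m' = dist p' q' / 2) (h4 : dist q' m' = dist p' q' / 2) :
    dist m m' ≤ (dist p p' + dist q q') / 2 := by
  obtain ⟨g, hg0, hgL, hg⟩ := hX.1 p q'
  set L := dist p q'
  have hL : 0 ≤ L := dist_nonneg
  have hdist : ∀ s ∈ Icc 0 L, dist (g s) (g (L / 2)) = |s - L / 2| := fun s hs =>
    hg s hs _ ⟨by linarith, by linarith⟩
  -- compare both midpoints with the midpoint `n` of the diagonal `[p, q']`
  set n := g (L / 2)
  have hpn : dist p n = L / 2 := by
    rw [← hg0, hdist 0 ⟨le_rfl, hL⟩, zero_sub, abs_neg, abs_of_nonneg (by linarith)]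
  have hq'n : dist q' n = L / 2 := by
    rw [← hgL, hdist L ⟨hL, le_rfl⟩, abs_of_nonneg (by linarith)]
    ring
  have hmn : dist m n ≤ dist q q' / 2 := hX.dist_midpoints_le_of_eq_left h1 h2 hpn hq'n
  have hnm' : dist n m' ≤ dist p p' / 2 := by
    rw [dist_comm p' q'] at h3 h4
    exact hX.dist_midpoints_le_of_eq_left (by rw [hq'n, dist_comm]) (by rw [hpn, dist_comm]) h4 h3
  linarith [dist_triangle m n m']

theorem dist_le_chord (hX : CAT0 X) {γ γ' : ℝ → X} {a b : ℝ} (ha : 0 ≤ a) (hb : 0 ≤ b)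
    (hγ : IsGeodesicOn γ a) (hγ' : IsGeodesicOn γ' b) {s : ℝ} (hs : s ∈ Icc (0 : ℝ) 1) :
    dist (γ (s * a)) (γ' (s * b)) ≤ (1 - s) * dist (γ 0) (γ' 0) + s * dist (γ a) (γ' b) := by
  have hmaps : ∀ {c : ℝ}, 0 ≤ c → MapsTo (· * c) (Icc (0 : ℝ) 1) (Icc 0 c) :=
    fun hc u hu => ⟨mul_nonneg hu.1 hc, mul_le_of_le_one_left hc hu.2⟩
  have key := ContinuousOn.le_chord_of_midpoint_le
    (f := fun u => dist (γ (u * a)) (γ' (u * b)))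
    (continuous_dist.comp_continuousOn
      ((hγ.continuousOn.comp (by fun_prop) (hmaps ha)).prodMk
        (hγ'.continuousOn.comp (by fun_prop) (hmaps hb))))
    (fun u hu v hv => ?_) hs
  · simpa using key
  · rw [show (u + v) / 2 * a = (u * a + v * a) / 2 by ring,
      show (u + v) / 2 * b = (u * b + v * b) / 2 by ring]
    exact hX.dist_midpoints_le (hγ.dist_midpoint_left (hmaps ha hu) (hmaps ha hv))
      (hγ.dist_midpoint_right (hmaps ha hu) (hmaps ha hv))
      (hγ'.dist_midpoint_left (hmaps hb hu) (hmaps hb hv))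
      (hγ'.dist_midpoint_right (hmaps hb hu) (hmaps hb hv))

theorem dist_le_two_mul_of_eq_end (hX : CAT0 X) {γ γ' : ℝ → X} {a b : ℝ}
    (hγ : IsGeodesicOn γ a) (hγ' : IsGeodesicOn γ' b) (hend : γ a = γ' b) {t : ℝ}
    (ht : 0 ≤ t) (hta : t ≤ a) (htb : t ≤ b) :
    dist (γ t) (γ' t) ≤ 2 * dist (γ 0) (γ' 0) := by
  set D := dist (γ 0) (γ' 0)
  have ha : 0 ≤ a := ht.trans hta
  have hb : 0 ≤ b := ht.trans htb
  have hlen : |a - b| ≤ D := by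
    have := abs_dist_sub_le (γ 0) (γ' 0) (γ a)
    rwa [hγ 0 ⟨le_rfl, ha⟩ a ⟨ha, le_rfl⟩, hend, hγ' 0 ⟨le_rfl, hb⟩ b ⟨hb, le_rfl⟩, zero_sub,
      zero_sub, abs_neg, abs_neg, abs_of_nonneg ha, abs_of_nonneg hb] at this
  rcases ha.eq_or_lt with rfl | ha
  · obtain rfl : t = 0 := le_antisymm hta ht
    linarith [dist_nonneg (x := γ 0) (y := γ' 0)]
  set σ := t / a
  have hσ : σ ∈ Icc (0 : ℝ) 1 := ⟨div_nonneg ht ha.le, (div_le_one ha).2 hta⟩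
  -- run both geodesics backwards from the common endpoint
  have hback := hX.dist_le_chord ha.le hb hγ.reverse hγ'.reverse
    (s := 1 - σ) ⟨by linarith [hσ.2], by linarith [hσ.1]⟩
  simp only [sub_self, sub_zero, hend, dist_self, mul_zero, zero_add] at hback
  rw [show a - (1 - σ) * a = t by simp only [σ]; field_simp; ring] at hback
  have hσb : σ * b ∈ Icc 0 b := ⟨mul_nonneg hσ.1 hb, mul_le_of_le_one_left hb hσ.2⟩
  have hshift : dist (γ' (σ * b)) (γ' t) ≤ D := by
    rw [hγ' _ hσb t ⟨ht, htb⟩, show σ * b - t = σ * (b - a) by simp only [σ]; field_simp, abs_mul,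
      abs_of_nonneg hσ.1, abs_sub_comm]
    exact (mul_le_of_le_one_left (abs_nonneg _) hσ.2).trans hlen
  calc dist (γ t) (γ' t) ≤ dist (γ t) (γ' (σ * b)) + dist (γ' (σ * b)) (γ' t) :=
        dist_triangle _ _ _
    _ ≤ D + D := by
        gcongr
        · rw [show b - (1 - σ) * b = σ * b by ring] at hback
          exact hback.trans (mul_le_of_le_one_left dist_nonneg (by linarith [hσ.1]))
    _ = 2 * D := by ring

end CAT0

theorem tendstoUniformlyOn_Icc_of_forall_dist_le {r : ℝ → X} {ri : ℕ → ℝ → X}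
    (hconv : ∀ T > (0 : ℝ), ∀ ε > (0 : ℝ), ∃ N : ℕ, ∀ n ≥ N,
      ∀ t ∈ Icc (0 : ℝ) T, dist (ri n t) (r t) ≤ ε) (T : ℝ) :
    TendstoUniformlyOn ri r atTop (Icc 0 T) := by
  rw [Metric.tendstoUniformlyOn_iff]
  intro ε hε
  obtain ⟨N, hN⟩ := hconv (max T 1) (by positivity) (ε / 2) (by positivity)
  filter_upwards [eventually_ge_atTop N] with n hn t ht
  rw [dist_comm]
  exact (hN n hn t ⟨ht.1, ht.2.trans (le_max_left _ _)⟩).trans_lt (half_lt_self hε)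

theorem IsGeodesicRay.exists_mem_of_tendstoUniformlyOn {Y : Set X} (hY : IsClosed Y) {r : ℝ → X}
    {ri : ℕ → ℝ → X} (hr : IsGeodesicRay r) {U : Ultrafilter ℕ}
    (hconv : ∀ T, TendstoUniformlyOn ri r U (Icc 0 T)) {τ : ℕ → ℝ} (hτ : ∀ n, 0 ≤ τ n)
    (hτY : ∀ n, ri n (τ n) ∈ Y) {M : ℝ} (hM : ∀ᶠ n in U, τ n ≤ M) : ∃ t ≥ 0, r t ∈ Y := by
  have hmem : ∀ᶠ n in U, τ n ∈ Icc 0 M := hM.mono fun n hn => ⟨hτ n, hn⟩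
  obtain ⟨t₀, ht₀, hlim⟩ := isCompact_Icc.ultrafilter_le_nhds (U.map τ) (le_principal_iff.2 hmem)
  have : Tendsto (fun n => ri n (τ n)) U (𝓝 (r t₀)) :=
    (hconv M).tendsto_comp ((hr.isGeodesicOn M).continuousOn t₀ ht₀)
      (tendsto_nhdsWithin_iff.2 ⟨hlim, hmem⟩)
  exact ⟨t₀, ht₀.1, hY.mem_of_tendsto this (.of_forall hτY)⟩

theorem exists_isGeodesicRay_tendsto [ProperSpace X] {Y : Set X} (hY : IsClosed Y)
    {ι : Type*} {U : Ultrafilter ι} {p : X} {g : ι → ℝ → X} {L : ι → ℝ}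
    (hg : ∀ i, IsGeodesicOn (g i) (L i)) (hgY : ∀ i s, g i s ∈ Y)
    (hgp : ∀ i s, dist p (g i s) ≤ |s|) (hL : ∀ c, ∀ᶠ i in U, c ≤ L i) :
    ∃ ρ : ℝ → X, IsGeodesicRay ρ ∧ (∀ t ≥ (0 : ℝ), ρ t ∈ Y) ∧
      ∀ t, Tendsto (fun i => g i t) U (𝓝 (ρ t)) := by
  choose ρ _ hρ using fun s => (isCompact_closedBall p |s|).ultrafilter_le_nhds
    (U.map fun i => g i s) (le_principal_iff.2 (mem_map.2
      (Eventually.of_forall fun i => Metric.mem_closedBall'.2 (hgp i s))))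
  replace hρ : ∀ s, Tendsto (fun i => g i s) U (𝓝 (ρ s)) := hρ
  refine ⟨ρ, fun s t hs ht => ?_, fun t _ => hY.mem_of_tendsto (hρ t) (.of_forall (hgY · t)), hρ⟩
  refine tendsto_nhds_unique ((hρ s).dist (hρ t)) (tendsto_const_nhds.congr' ?_)
  filter_upwards [hL (max s t)] with i hi
  exact (hg i s ⟨hs, (le_max_left _ _).trans hi⟩ t ⟨ht, (le_max_right _ _).trans hi⟩).symm

theorem CAT0.exists_asymptoticRays_of_tendsto_atTop [ProperSpace X] (hX : CAT0 X) {Y : Set X}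
    (hYcl : IsClosed Y) (hYconv : MetricConvex Y) {x₀ : X}
    {r : ℝ → X} {ri : ℕ → ℝ → X} (hri : ∀ i, IsGeodesicRay (ri i) ∧ ri i 0 = x₀)
    {U : Ultrafilter ℕ} (hlim : ∀ t ≥ (0 : ℝ), Tendsto (fun n => ri n t) U (𝓝 (r t)))
    {τ : ℕ → ℝ} (hτ : ∀ n, 0 ≤ τ n) (hτY : ∀ n, ri n (τ n) ∈ Y)
    (hτU : ∀ c, ∀ᶠ n in U, c ≤ τ n) :
    ∃ ρ : ℝ → X, IsGeodesicRay ρ ∧ (∀ t ≥ (0 : ℝ), ρ t ∈ Y) ∧ AsymptoticRays r ρ := by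
  set p := ri 0 (τ 0)
  set D := dist x₀ p
  choose g hg hg0 hgq hgp using fun n => hX.1.exists_clampedGeodesic p (ri n (τ n))
  have hτdist : ∀ n, dist x₀ (ri n (τ n)) = τ n := fun n => by
    rw [← (hri n).2, (hri n).1 0 (τ n) le_rfl (hτ n), zero_sub, abs_neg, abs_of_nonneg (hτ n)]
  have hL : ∀ c, ∀ᶠ n in U, c ≤ dist p (ri n (τ n)) := fun c =>
    (hτU (c + D)).mono fun n hn => by linarith [dist_triangle x₀ p (ri n (τ n)), hτdist n]
  obtain ⟨ρ, hρ, hρY, hgρ⟩ := exists_isGeodesicRay_tendsto hYcl hg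
    (fun n s => hYconv p (hτY 0) _ (hτY n) _ (hgp n s).2) (fun n s => (hgp n s).1) hL
  refine ⟨ρ, hρ, hρY, 2 * D + 1, fun t ht => ?_⟩
  refine le_of_tendsto ((tendsto_const_nhds (x := r t)).dist (hgρ t)) ?_
  filter_upwards [hτU t, hL t, hlim t ht (Metric.ball_mem_nhds _ one_pos)] with n htτ htL hnear
  have hcmp := hX.dist_le_two_mul_of_eq_end ((hri n).1.isGeodesicOn (τ n)) (hg n) (hgq n).symm
    ht htτ htL
  rw [(hri n).2, hg0 n] at hcmp
  calc dist (r t) (g n t) ≤ dist (r t) (ri n t) + dist (ri n t) (g n t) := dist_triangle _ _ _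
    _ ≤ 1 + 2 * D := add_le_add (by rw [dist_comm]; exact (Metric.mem_ball.1 hnear).le) hcmp
    _ = 2 * D + 1 := by ring

end

theorem stmt_9_general {X : Type*} [MetricSpace X] [ProperSpace X] (hX : CAT0 X)
    (Y : Set X) (hYcl : IsClosed Y) (hYconv : MetricConvex Y)
    (x₀ : X) (r : ℝ → X) (ri : ℕ → ℝ → X)
    (hr : IsGeodesicRay r)
    (hri : ∀ i, IsGeodesicRay (ri i) ∧ ri i 0 = x₀)
    (hconv : ∀ T > (0:ℝ), ∀ ε > (0:ℝ), ∃ N : ℕ, ∀ n ≥ N,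
      ∀ t ∈ Set.Icc (0:ℝ) T, dist (ri n t) (r t) ≤ ε)
    (hint : ∀ i, ∃ t ≥ (0:ℝ), ri i t ∈ Y) :
    (∃ t ≥ (0:ℝ), r t ∈ Y) ∨
      ∃ ρ : ℝ → X, IsGeodesicRay ρ ∧ (∀ t ≥ (0:ℝ), ρ t ∈ Y) ∧ AsymptoticRays r ρ := by
  have hunif := tendstoUniformlyOn_Icc_of_forall_dist_le hconv
  choose τ hτ hτY using hint
  set U := Ultrafilter.of (atTop : Filter ℕ)
  have hU : ↑U ≤ (atTop : Filter ℕ) := Ultrafilter.of_le _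
  -- along an ultrafilter, the hitting times either stay bounded or tend to infinity
  by_cases hbdd : ∃ M, ∀ᶠ n in U, τ n ≤ M
  · obtain ⟨M, hM⟩ := hbdd
    exact Or.inl (hr.exists_mem_of_tendstoUniformlyOn hYcl (fun T u hu => hU (hunif T u hu))
      hτ hτY hM)
  · push Not at hbdd
    exact Or.inr (hX.exists_asymptoticRays_of_tendsto_atTop hYcl hYconv hri
      (fun t ht => ((hunif t).tendsto_at ⟨ht, le_rfl⟩).mono_left hU) hτ hτY
      fun c => (hbdd c).mono fun _ hn => hn.le)

/-- In a proper CAT(0) space, if geodesic rays `rᵢ` based at `x₀`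
converge uniformly on compacta to a geodesic ray `r` based at `x₀` and every
`rᵢ` meets the closed convex set `Y`, then either `r` meets `Y` or `r` is
asymptotic to a geodesic ray contained in `Y` (i.e. `r(∞) ∈ ∂Y`). -/
theorem stmt_9 {X : Type*} [MetricSpace X] [ProperSpace X] (hX : CAT0 X)
    (Y : Set X) (hYcl : IsClosed Y) (hYconv : MetricConvex Y)
    (x₀ : X) (r : ℝ → X) (ri : ℕ → ℝ → X)
    (hr : IsGeodesicRay r) (hr0 : r 0 = x₀)
    (hri : ∀ i, IsGeodesicRay (ri i) ∧ ri i 0 = x₀)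
    (hconv : ∀ T > (0:ℝ), ∀ ε > (0:ℝ), ∃ N : ℕ, ∀ n ≥ N,
      ∀ t ∈ Set.Icc (0:ℝ) T, dist (ri n t) (r t) ≤ ε)
    (hint : ∀ i, ∃ t ≥ (0:ℝ), ri i t ∈ Y) :
    (∃ t ≥ (0:ℝ), r t ∈ Y) ∨
      ∃ ρ : ℝ → X, IsGeodesicRay ρ ∧ (∀ t ≥ (0:ℝ), ρ t ∈ Y) ∧ AsymptoticRays r ρ :=
  stmt_9_general hX Y hYcl hYconv x₀ r ri hr hri hconv hint
end

section
/- Let X be a CAT(0) space, F a closed convex subset, and q : [0,∞) → X a geodesic ray with the property that q(0) is the nearest point of F to q(t) for all t. Let x₀ ∈ F, let c be the geodesic ray based at x₀ asymptotic to q, and suppose c lies in the κ-neighborhood of q ∪ F. Then d(c(t), q(0)) ≤ 6κ, where t = d(x₀, q(0)). -/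
/-!
Write `Q` for the image of `q`. Along `c` the function `t ↦ d(c t, F) - d(c t, Q)` is `≤ 0` at
`t = 0` (as `c 0 ∈ F`) and `≥ 0` once `c` is far out, because `c` stays close to `q` while
orthogonality keeps `q t` at distance `t` from `F`. At a zero `t'` both distances are at most `κ`,
so there are `y ∈ F` and `q s` that are `κ`-close to `c t'`; orthogonality gives
`s = d(q s, q 0) ≤ d(q s, y) ≤ 2κ`, whence `d(c t', q 0) ≤ 3κ`. Finally, moving along the ray `c`
from `c t'` to `c t` with `t = d(c 0, q 0)` costs `|t - t'| ≤ d(c t', q 0)`.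
-/

open Metric Set

section

variable {X : Type*} [MetricSpace X]

def IsOrthogonalRay (q : ℝ → X) (F : Set X) : Prop :=
  ∀ t ≥ (0 : ℝ), ∀ y ∈ F, dist (q t) (q 0) ≤ dist (q t) y

namespace IsGeodesicRay

variable {r : ℝ → X}

theorem dist_zero (hr : IsGeodesicRay r) {t : ℝ} (ht : 0 ≤ t) : dist (r t) (r 0) = t := by
  rw [hr t 0 ht le_rfl, sub_zero, abs_of_nonneg ht]

theorem continuousOn (hr : IsGeodesicRay r) : ContinuousOn r (Ici 0) := by
  refine (LipschitzOnWith.of_dist_le_mul fun s hs t ht => ?_ : LipschitzOnWith 1 r _).continuousOn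
  rw [hr s t hs ht, Real.dist_eq, NNReal.coe_one, one_mul]

theorem dist_apply_dist_le (hr : IsGeodesicRay r) (p : X) {t : ℝ} (ht : 0 ≤ t) :
    dist (r (dist (r 0) p)) p ≤ 2 * dist (r t) p := by
  have hback : |dist (r 0) p - t| ≤ dist (r t) p := by
    simpa only [dist_comm p, hr.dist_zero ht] using abs_dist_sub_le p (r t) (r 0)
  calc dist (r (dist (r 0) p)) p ≤ dist (r (dist (r 0) p)) (r t) + dist (r t) p :=
        dist_triangle _ _ _
    _ = |dist (r 0) p - t| + dist (r t) p := by rw [hr _ _ dist_nonneg ht]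
    _ ≤ 2 * dist (r t) p := by linarith

end IsGeodesicRay

namespace IsOrthogonalRay

variable {q : ℝ → X} {F : Set X}

theorem le_dist (horth : IsOrthogonalRay q F) (hq : IsGeodesicRay q) {s : ℝ} (hs : 0 ≤ s)
    {y : X} (hy : y ∈ F) : s ≤ dist (q s) y :=
  (hq.dist_zero hs).symm.trans_le (horth s hs y hy)

theorem sub_dist_le_infDist (horth : IsOrthogonalRay q F) (hq : IsGeodesicRay q)
    (hF : F.Nonempty) (x : X) {t : ℝ} (ht : 0 ≤ t) : t - dist x (q t) ≤ infDist x F := by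
  refine (le_infDist hF).2 fun y hy => ?_
  have := horth.le_dist hq ht hy
  linarith [dist_triangle (q t) x y, dist_comm x (q t)]

theorem dist_le_infDist_add (horth : IsOrthogonalRay q F) (hq : IsGeodesicRay q)
    (hF : F.Nonempty) (x : X) :
    dist x (q 0) ≤ infDist x F + 2 * infDist x (q '' Ici 0) := by
  have hQ : (q '' Ici 0).Nonempty := ⟨q 0, 0, self_mem_Ici, rfl⟩
  suffices ∀ y ∈ F, (dist x (q 0) - dist x y) / 2 ≤ infDist x (q '' Ici 0) by
    have hF' : dist x (q 0) - 2 * infDist x (q '' Ici 0) ≤ infDist x F :=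
      (le_infDist hF).2 fun y hy => by linarith [this y hy]
    linarith
  intro y hy
  refine (le_infDist hQ).2 ?_
  rintro _ ⟨s, hs, rfl⟩
  have hsy := horth.le_dist hq hs hy
  have hs0 := hq.dist_zero hs
  linarith [dist_triangle x (q s) (q 0), dist_triangle (q s) x y, dist_comm x (q s)]

end IsOrthogonalRay

theorem exists_infDist_eq_infDist {γ : ℝ → X} {A B : Set X} {a b : ℝ} (hab : a ≤ b)
    (hγ : ContinuousOn γ (Icc a b)) (ha : γ a ∈ A) (hb : infDist (γ b) B ≤ infDist (γ b) A) :
    ∃ t ∈ Icc a b, infDist (γ t) A = infDist (γ t) B := by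
  have hcont : ContinuousOn (fun t => infDist (γ t) A - infDist (γ t) B) (Icc a b) :=
    ((continuous_infDist_pt A).comp_continuousOn hγ).sub
      ((continuous_infDist_pt B).comp_continuousOn hγ)
  have hzero : (0 : ℝ) ∈ Icc (infDist (γ a) A - infDist (γ a) B)
      (infDist (γ b) A - infDist (γ b) B) := by
    rw [infDist_zero_of_mem ha]
    exact ⟨by linarith [infDist_nonneg (x := γ a) (s := B)], by linarith⟩
  obtain ⟨t, ht, hdiff⟩ := intermediate_value_Icc hab hcont hzero
  exact ⟨t, ht, sub_eq_zero.1 hdiff⟩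

end

theorem stmt_12_general {X : Type*} [MetricSpace X]
    (F : Set X)
    (κ : ℝ)
    (q : ℝ → X) (hq : IsGeodesicRay q)
    (horth : ∀ t ≥ (0:ℝ), ∀ y ∈ F, dist (q t) (q 0) ≤ dist (q t) y)
    (x₀ : X) (hx₀ : x₀ ∈ F)
    (c : ℝ → X) (hc : IsGeodesicRay c) (hc0 : c 0 = x₀)
    (hasym : AsymptoticRays c q)
    (hnbhd : ∀ t ≥ (0:ℝ), ∃ z : X,
      (z ∈ F ∨ ∃ s ≥ (0:ℝ), z = q s) ∧ dist (c t) z ≤ κ) :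
    dist (c (dist x₀ (q 0))) (q 0) ≤ 6 * κ := by
  subst hc0
  have horth : IsOrthogonalRay q F := horth
  obtain ⟨C, hC⟩ := hasym
  have hC0 : 0 ≤ C := dist_nonneg.trans (hC 0 le_rfl)
  have hF : F.Nonempty := ⟨c 0, hx₀⟩
  have hfar : infDist (c (2 * C)) (q '' Ici 0) ≤ infDist (c (2 * C)) F := by
    have hcq := hC (2 * C) (by positivity)
    calc infDist (c (2 * C)) (q '' Ici 0) ≤ dist (c (2 * C)) (q (2 * C)) :=
          infDist_le_dist_of_mem ⟨2 * C, mem_Ici.2 (by positivity), rfl⟩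
      _ ≤ 2 * C - dist (c (2 * C)) (q (2 * C)) := by linarith
      _ ≤ infDist (c (2 * C)) F :=
        horth.sub_dist_le_infDist hq hF _ (by positivity)
  obtain ⟨t, ht, hFQ⟩ := exists_infDist_eq_infDist (by positivity)
    (hc.continuousOn.mono Icc_subset_Ici_self) hx₀ hfar
  have hκ : infDist (c t) F ≤ κ ∧ infDist (c t) (q '' Ici 0) ≤ κ := by
    obtain ⟨z, hz | ⟨s, hs, rfl⟩, hcz⟩ := hnbhd t ht.1
    · have hκF := (infDist_le_dist_of_mem hz).trans hcz
      exact ⟨hκF, hFQ ▸ hκF⟩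
    · have hκQ := (infDist_le_dist_of_mem (mem_image_of_mem q (mem_Ici.2 hs))).trans hcz
      exact ⟨hFQ ▸ hκQ, hκQ⟩
  calc dist (c (dist (c 0) (q 0))) (q 0) ≤ 2 * dist (c t) (q 0) := hc.dist_apply_dist_le _ ht.1
    _ ≤ 2 * (infDist (c t) F + 2 * infDist (c t) (q '' Ici 0)) := by
        gcongr; exact horth.dist_le_infDist_add hq hF _
    _ ≤ 6 * κ := by linarith

/-- In a CAT(0) space with `F` closed and convex, `q` a geodesic
ray orthogonal to `F`, `x₀ ∈ F`, and `c` the geodesic ray based at `x₀`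
asymptotic to `q`, if `c` lies in the `κ`-neighborhood of `q ∪ F` then
`d(c(t), q(0)) ≤ 6κ` where `t = d(x₀, q(0))`. -/
theorem stmt_12 {X : Type*} [MetricSpace X] (hX : CAT0 X)
    (F : Set X) (hFcl : IsClosed F) (hFconv : MetricConvex F)
    (κ : ℝ) (hκ : 0 < κ)
    (q : ℝ → X) (hq : IsGeodesicRay q) (hq0 : q 0 ∈ F)
    (horth : ∀ t ≥ (0:ℝ), ∀ y ∈ F, dist (q t) (q 0) ≤ dist (q t) y)
    (x₀ : X) (hx₀ : x₀ ∈ F)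
    (c : ℝ → X) (hc : IsGeodesicRay c) (hc0 : c 0 = x₀)
    (hasym : AsymptoticRays c q)
    (hnbhd : ∀ t ≥ (0:ℝ), ∃ z : X,
      (z ∈ F ∨ ∃ s ≥ (0:ℝ), z = q s) ∧ dist (c t) z ≤ κ) :
    dist (c (dist x₀ (q 0))) (q 0) ≤ 6 * κ :=
  stmt_12_general F κ q hq horth x₀ hx₀ c hc hc0 hasym hnbhd
end

section
/- Let X be a geodesic metric space with a block decomposition B whose nerve is a tree, with ε-condition constant ε > 0. If B and B' are blocks whose corresponding vertices in the nerve tree are at distance at least 2n, then d(B, B') ≥ 2nε in X. -/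
/-
Points of `X` that are closer than `2ε` lie in equal or adjacent blocks: the midpoint of a geodesic
between them lies in the `ε`-thickenings of both blocks, so by the `ε`-condition the blocks meet.
Cutting a geodesic of length `< 2kε` into `k` pieces of length `< 2ε` therefore yields a walk of
length at most `k` in the nerve; so `d(x, y) < 2nε` would give tree-distance at most `n < 2n`.
-/

theorem GeodesicSpace.exists_dist_lt_and_dist_lt {X : Type*} [MetricSpace X]
    (hgeo : GeodesicSpace X) {x y : X} {a b : ℝ} (ha : 0 < a) (hb : 0 < b)
    (hxy : dist x y < a + b) : ∃ z, dist x z < a ∧ dist z y < b := by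
  obtain ⟨g, hg0, hgd, hgiso⟩ := hgeo x y
  set d := dist x y
  have hd : 0 ≤ d := dist_nonneg
  have hab : 0 < a + b := add_pos ha hb
  -- split the geodesic in the ratio `a : b`
  obtain ⟨t, ht⟩ : ∃ t, t * (a + b) = d * a := ⟨d * a / (a + b), div_mul_cancel₀ _ hab.ne'⟩
  have ht₀ : 0 ≤ t := nonneg_of_mul_nonneg_left (by rw [ht]; positivity) hab
  have hta : t < a := lt_of_mul_lt_mul_right (by rw [ht]; nlinarith) hab.le
  have htd : t ≤ d := le_of_mul_le_mul_right (by rw [ht]; nlinarith) hab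
  have hdt : d - t < b := lt_of_mul_lt_mul_right (by rw [sub_mul, ht]; nlinarith) hab.le
  refine ⟨g t, ?_, ?_⟩
  · rwa [← hg0, hgiso 0 ⟨le_rfl, hd⟩ t ⟨ht₀, htd⟩, zero_sub, abs_neg, abs_of_nonneg ht₀]
  · rwa [← hgd, hgiso t ⟨ht₀, htd⟩ d ⟨hd, le_rfl⟩, abs_sub_comm, abs_of_nonneg (by linarith)]

section Blocks

variable {X V : Type*} [MetricSpace X] (hgeo : GeodesicSpace X) {G : SimpleGraph V}
  {B : V → Set X} {ε : ℝ} (hε : 0 < ε)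
  (hadj : ∀ v w, v ≠ w → ((B v ∩ B w).Nonempty ↔ G.Adj v w))
  (heps : ∀ v w, v ≠ w → ((B v ∩ B w).Nonempty ↔
    (Metric.thickening ε (B v) ∩ Metric.thickening ε (B w)).Nonempty))
include hgeo hε hadj heps

theorem exists_walk_length_le_one_of_dist_lt {u₁ u₂ : V} {x₁ x₂ : X} (h₁ : x₁ ∈ B u₁)
    (h₂ : x₂ ∈ B u₂) (hlt : dist x₁ x₂ < 2 * ε) : ∃ p : G.Walk u₁ u₂, p.length ≤ 1 := by
  by_cases hu : u₁ = u₂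
  · subst hu
    exact ⟨.nil, zero_le_one⟩
  obtain ⟨m, hm₁, hm₂⟩ := hgeo.exists_dist_lt_and_dist_lt hε hε (by linarith)
  have hthick : (Metric.thickening ε (B u₁) ∩ Metric.thickening ε (B u₂)).Nonempty :=
    ⟨m, Metric.mem_thickening_iff.2 ⟨x₁, h₁, by rwa [dist_comm]⟩,
      Metric.mem_thickening_iff.2 ⟨x₂, h₂, hm₂⟩⟩
  have huv : G.Adj u₁ u₂ := (hadj u₁ u₂ hu).1 ((heps u₁ u₂ hu).2 hthick)
  exact ⟨huv.toWalk, le_rfl⟩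

theorem exists_walk_length_le_of_dist_lt (hcover : (⋃ v, B v) = Set.univ) (k : ℕ) :
    ∀ {v w : V}, ∀ x ∈ B v, ∀ y ∈ B w, dist x y < 2 * (k + 1) * ε →
      ∃ p : G.Walk v w, p.length ≤ k + 1 := by
  induction k with
  | zero =>
    intro v w x hx y hy hxy
    exact exists_walk_length_le_one_of_dist_lt hgeo hε hadj heps hx hy (by simpa using hxy)
  | succ k ih =>
    intro v w x hx y hy hxy
    obtain ⟨z, hxz, hzy⟩ := hgeo.exists_dist_lt_and_dist_lt (by positivity : 0 < 2 * ε)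
      (by positivity : 0 < 2 * (k + 1) * ε) (by push_cast at hxy; linarith)
    obtain ⟨u, hu⟩ := Set.mem_iUnion.1 (hcover.symm ▸ Set.mem_univ z)
    obtain ⟨p, hp⟩ := exists_walk_length_le_one_of_dist_lt hgeo hε hadj heps hx hu hxz
    obtain ⟨q, hq⟩ := ih z hu y hy hzy
    exact ⟨p.append q, by rw [SimpleGraph.Walk.length_append]; omega⟩

end Blocks

theorem stmt_13_general {X V : Type*} [MetricSpace X] (hgeo : GeodesicSpace X)
    (G : SimpleGraph V)
    (B : V → Set X)
    (hcover : (⋃ v, B v) = Set.univ)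
    (ε : ℝ) (hε : 0 < ε)
    (hadj : ∀ v w, v ≠ w → ((B v ∩ B w).Nonempty ↔ G.Adj v w))
    (heps : ∀ v w, v ≠ w → ((B v ∩ B w).Nonempty ↔
      (Metric.thickening ε (B v) ∩ Metric.thickening ε (B w)).Nonempty))
    (n : ℕ) (v w : V) (hd : 2 * n ≤ G.dist v w) :
    ∀ x ∈ B v, ∀ y ∈ B w, 2 * n * ε ≤ dist x y := by
  intro x hx y hy
  rcases n with _ | m
  · simp [dist_nonneg]
  by_contra! hlt
  obtain ⟨p, hp⟩ := exists_walk_length_le_of_dist_lt hgeo hε hadj heps hcover m x hx y hy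
    (by exact_mod_cast hlt)
  have := SimpleGraph.dist_le p
  omega

/-- Let `X` be a geodesic metric space with a block decomposition
whose nerve is the tree `G` (blocks `B v` indexed by vertices, adjacency iff
nontrivial intersection), with ε-condition constant `ε > 0`. If the vertices of
two blocks are at tree-distance at least `2n`, then the blocks are at distance
at least `2nε` in `X`. -/
theorem stmt_13 {X V : Type*} [MetricSpace X] (hgeo : GeodesicSpace X)
    (G : SimpleGraph V) (htree : G.IsTree)
    (B : V → Set X)
    (hclosed : ∀ v, IsClosed (B v)) (hconv : ∀ v, MetricConvex (B v))
    (hcover : (⋃ v, B v) = Set.univ)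
    (htwo : ∀ v, ∃ u w, u ≠ w ∧ G.Adj v u ∧ G.Adj v w)
    (ε : ℝ) (hε : 0 < ε)
    (hadj : ∀ v w, v ≠ w → ((B v ∩ B w).Nonempty ↔ G.Adj v w))
    (heps : ∀ v w, v ≠ w → ((B v ∩ B w).Nonempty ↔
      (Metric.thickening ε (B v) ∩ Metric.thickening ε (B w)).Nonempty))
    (n : ℕ) (v w : V) (hd : 2 * n ≤ G.dist v w) :
    ∀ x ∈ B v, ∀ y ∈ B w, 2 * n * ε ≤ dist x y :=
  stmt_13_general hgeo G B hcover ε hε hadj heps n v w hd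
end

section
/- Let X be a CAT(0) space with block decomposition B such that each block has path connected visual boundary and each wall has nonempty visual boundary. Then the rational part of the boundary, ∂_R X = ⋃_{B∈B} ∂B, is path connected. -/
/-- The visual boundary based at `x₀`: geodesic rays based at `x₀`, topologized
as a subspace of `ℝ → X` (for based geodesic rays, pointwise convergence agrees
with the cone topology). -/
abbrev VisualBoundary (X : Type*) [MetricSpace X] (x₀ : X) : Type _ :=
  {r : ℝ → X // IsGeodesicRay r ∧ r 0 = x₀}

/-- The trace of a subset `S ⊆ X` in the visual boundary: boundary points
represented by a geodesic ray lying in `S`. -/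
def bdryIn {X : Type*} [MetricSpace X] (x₀ : X) (S : Set X) :
    Set (VisualBoundary X x₀) :=
  {r | ∃ ρ : ℝ → X, IsGeodesicRay ρ ∧ (∀ t ≥ (0:ℝ), ρ t ∈ S) ∧
    AsymptoticRays r.1 ρ}

/-!
A block decomposition of a connected space is chained: any family of blocks closed under
adjacency and containing a nonempty block contains every nonempty block, since otherwise the
ε-thickenings of the two families would be disjoint open sets covering `X`. Joining boundary
points through the boundaries of walls, which lie in the boundaries of both adjacent blocks,
shows that the blocks whose boundary points are all joined to a fixed one form such a family.
-/

open Set Metric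

lemma GeodesicSpace.preconnectedSpace {X : Type*} [MetricSpace X] (h : GeodesicSpace X) :
    PreconnectedSpace X := by
  refine ⟨isPreconnected_of_forall_pair fun x _ y _ => ?_⟩
  obtain ⟨g, hg0, hgd, hiso⟩ := h x y
  have hg : ContinuousOn g (Icc 0 (dist x y)) :=
    (LipschitzOnWith.mk_one fun s hs t ht => by
      rw [hiso s hs t ht, Real.dist_eq]).continuousOn
  exact ⟨g '' Icc 0 (dist x y), subset_univ _,
    ⟨0, left_mem_Icc.2 dist_nonneg, hg0⟩, ⟨dist x y, right_mem_Icc.2 dist_nonneg, hgd⟩,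
    isPreconnected_Icc.image g hg⟩

lemma mem_of_forall_inter_nonempty_mem {X : Type*} [PseudoMetricSpace X] [PreconnectedSpace X]
    {𝓑 : Set (Set X)} (hcover : ⋃₀ 𝓑 = univ) {ε : ℝ} (hε : 0 < ε)
    (heps : ∀ B ∈ 𝓑, ∀ B' ∈ 𝓑, B ≠ B' →
      (thickening ε B ∩ thickening ε B').Nonempty → (B ∩ B').Nonempty)
    {S : Set (Set X)} (hS𝓑 : S ⊆ 𝓑) {B₀ : Set X} (hB₀ : B₀ ∈ S)
    (hB₀ne : B₀.Nonempty)
    (hS : ∀ B ∈ S, ∀ B' ∈ 𝓑, (B ∩ B').Nonempty → B' ∈ S)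
    {B : Set X} (hB : B ∈ 𝓑) (hBne : B.Nonempty) : B ∈ S := by
  by_contra hBS
  have hcov : univ ⊆ thickening ε (⋃₀ S) ∪ thickening ε (⋃₀ (𝓑 \ S)) := by
    intro z _
    obtain ⟨C, hC, hzC⟩ : z ∈ ⋃₀ 𝓑 := hcover ▸ mem_univ z
    by_cases hCS : C ∈ S
    · exact .inl (self_subset_thickening hε _ ⟨C, hCS, hzC⟩)
    · exact .inr (self_subset_thickening hε _ ⟨C, ⟨hC, hCS⟩, hzC⟩)
  have hu : (univ ∩ thickening ε (⋃₀ S)).Nonempty :=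
    let ⟨a, ha⟩ := hB₀ne
    ⟨a, mem_univ a, self_subset_thickening hε _ ⟨B₀, hB₀, ha⟩⟩
  have hv : (univ ∩ thickening ε (⋃₀ (𝓑 \ S))).Nonempty :=
    let ⟨b, hb⟩ := hBne
    ⟨b, mem_univ b, self_subset_thickening hε _ ⟨B, ⟨hB, hBS⟩, hb⟩⟩
  obtain ⟨z, -, hzu, hzv⟩ :=
    isPreconnected_univ _ _ isOpen_thickening isOpen_thickening hcov hu hv
  obtain ⟨a, ⟨C, hCS, haC⟩, hza⟩ := mem_thickening_iff.1 hzu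
  obtain ⟨b, ⟨C', ⟨hC', hC'S⟩, hbC'⟩, hzb⟩ := mem_thickening_iff.1 hzv
  have hCC' : C ≠ C' := by rintro rfl; exact hC'S hCS
  exact hC'S <| hS C hCS C' hC' <| heps C (hS𝓑 hCS) C' hC' hCC'
    ⟨z, mem_thickening_iff.2 ⟨a, haC, hza⟩, mem_thickening_iff.2 ⟨b, hbC', hzb⟩⟩

section bdryIn

variable {X : Type*} [MetricSpace X] {x₀ : X}

lemma bdryIn_mono {S T : Set X} (hST : S ⊆ T) : bdryIn x₀ S ⊆ bdryIn x₀ T :=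
  fun _ ⟨ρ, hρ, hρS, hasymp⟩ => ⟨ρ, hρ, fun t ht => hST (hρS t ht), hasymp⟩

lemma Set.Nonempty.of_bdryIn {S : Set X} (h : (bdryIn x₀ S).Nonempty) : S.Nonempty :=
  let ⟨_, _, _, hρS, _⟩ := h
  ⟨_, hρS 0 le_rfl⟩

end bdryIn

theorem stmt_15_general {X : Type*} [MetricSpace X] (hX : CAT0 X)
    (𝓑 : Set (Set X))
    (hcover : ⋃₀ 𝓑 = Set.univ)
    (ε : ℝ) (hε : 0 < ε)
    (heps : ∀ B ∈ 𝓑, ∀ B' ∈ 𝓑, B ≠ B' → ((B ∩ B').Nonempty ↔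
      (Metric.thickening ε B ∩ Metric.thickening ε B').Nonempty))
    (x₀ : X)
    (hblocks : ∀ B ∈ 𝓑, IsPathConnected (bdryIn x₀ B))
    (hwalls : ∀ B ∈ 𝓑, ∀ B' ∈ 𝓑, B ≠ B' → (B ∩ B').Nonempty →
      (bdryIn x₀ (B ∩ B')).Nonempty) :
    IsPathConnected (⋃ B ∈ 𝓑, bdryIn x₀ B) := by
  set U := ⋃ B ∈ 𝓑, bdryIn x₀ B
  have joinedIn_of_mem_block :
      ∀ B ∈ 𝓑, ∀ p ∈ bdryIn x₀ B, ∀ q ∈ bdryIn x₀ B, JoinedIn U p q :=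
    fun B hB p hp q hq => ((hblocks B hB).joinedIn p hp q hq).mono (subset_biUnion_of_mem hB)
  obtain ⟨B₀, hB₀, -⟩ : x₀ ∈ ⋃₀ 𝓑 := hcover ▸ mem_univ x₀
  obtain ⟨p₀, hp₀⟩ := (hblocks B₀ hB₀).nonempty
  set S := {B ∈ 𝓑 | ∀ q ∈ bdryIn x₀ B, JoinedIn U p₀ q}
  have hS : ∀ B ∈ S, ∀ B' ∈ 𝓑, (B ∩ B').Nonempty → B' ∈ S := by
    rintro B ⟨hB, hjoined⟩ B' hB' hmeet
    refine ⟨hB', fun q hq => ?_⟩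
    obtain rfl | hne := eq_or_ne B B'
    · exact hjoined q hq
    obtain ⟨w, hw⟩ := hwalls B hB B' hB' hne hmeet
    exact (hjoined w (bdryIn_mono inter_subset_left hw)).trans
      (joinedIn_of_mem_block B' hB' w (bdryIn_mono inter_subset_right hw) q hq)
  have hB₀S : B₀ ∈ S := ⟨hB₀, joinedIn_of_mem_block B₀ hB₀ p₀ hp₀⟩
  have : PreconnectedSpace X := hX.1.preconnectedSpace
  refine ⟨p₀, subset_biUnion_of_mem hB₀ hp₀, fun {q} hq => ?_⟩
  obtain ⟨B, hB, hqB⟩ := mem_iUnion₂.1 hq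
  have hBS : B ∈ S :=
    mem_of_forall_inter_nonempty_mem hcover hε
      (fun B hB B' hB' hne => (heps B hB B' hB' hne).2) (sep_subset _ _)
      hB₀S (Nonempty.of_bdryIn ⟨p₀, hp₀⟩) hS hB (Nonempty.of_bdryIn ⟨q, hqB⟩)
  exact hBS.2 q hqB

/-- For a block decomposition `𝓑` of a CAT(0) space `X` in which
every block has path connected visual boundary and every wall has nonempty
visual boundary, the rational part of the boundary, `∂_R X = ⋃_{B∈𝓑} ∂B`, is
path connected. -/
theorem stmt_15 {X : Type*} [MetricSpace X] [ProperSpace X] (hX : CAT0 X)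
    (𝓑 : Set (Set X))
    (hclosed : ∀ B ∈ 𝓑, IsClosed B) (hconv : ∀ B ∈ 𝓑, MetricConvex B)
    (hcover : ⋃₀ 𝓑 = Set.univ)
    (htwo : ∀ B ∈ 𝓑, ∃ B₁ ∈ 𝓑, ∃ B₂ ∈ 𝓑, B₁ ≠ B₂ ∧ B₁ ≠ B ∧ B₂ ≠ B ∧
      (B ∩ B₁).Nonempty ∧ (B ∩ B₂).Nonempty)
    (hparity : ∃ sign : Set X → Bool, ∀ B ∈ 𝓑, ∀ B' ∈ 𝓑, B ≠ B' →
      (B ∩ B').Nonempty → sign B ≠ sign B')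
    (ε : ℝ) (hε : 0 < ε)
    (heps : ∀ B ∈ 𝓑, ∀ B' ∈ 𝓑, B ≠ B' → ((B ∩ B').Nonempty ↔
      (Metric.thickening ε B ∩ Metric.thickening ε B').Nonempty))
    (x₀ : X)
    (hblocks : ∀ B ∈ 𝓑, IsPathConnected (bdryIn x₀ B))
    (hwalls : ∀ B ∈ 𝓑, ∀ B' ∈ 𝓑, B ≠ B' → (B ∩ B').Nonempty →
      (bdryIn x₀ (B ∩ B')).Nonempty) :
    IsPathConnected (⋃ B ∈ 𝓑, bdryIn x₀ B) :=
  stmt_15_general hX 𝓑 hcover ε hε heps x₀ hblocks hwalls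
end
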